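/- Let f : ℝⁿ → ℝ ∪ {+∞} be convex, proper, lower semicontinuous, finite at x̄ with 0 ∈ ∂f(x̄), and suppose its second subderivative d²f(x̄ | 0) is proper with subdifferential satisfying ∂[½ d²f(x̄|0)] = D(∂f)(x̄|0). If [D(∂f)(x̄|0)]^{-1}(0) = {0}, then d²f(x̄|0)(w) > 0 for all w ≠ 0. -/

import Mathlib

open Filter Topology
open scoped ENNReal NNReal Pointwise

noncomputable section

abbrev En (n : ℕ) := EuclideanSpace ℝ (Fin n)

/-- Regular (Fréchet) subgradients of an extended-real-valued function. -/
def RegSubgrad {n : ℕ} (f : En n → EReal) (x : En n) : Set (En n) :=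
  {v | ∀ ε : ℝ, 0 < ε → ∃ δ : ℝ, 0 < δ ∧ ∀ u : En n, ‖u - x‖ < δ → u ≠ x →
      f x + (((inner ℝ v (u - x) : ℝ) - ε * ‖u - x‖ : ℝ) : EReal) ≤ f u}

/-- Limiting (Mordukhovich) subgradients. -/
def LimSubgrad {n : ℕ} (f : En n → EReal) (x : En n) : Set (En n) :=
  {v | ∃ xk vk : ℕ → En n,
      Tendsto xk atTop (nhds x) ∧ Tendsto vk atTop (nhds v) ∧
      Tendsto (fun k => f (xk k)) atTop (nhds (f x)) ∧
      ∀ k, vk k ∈ RegSubgrad f (xk k)}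

/-- Outer limiting subgradients: limits of limiting subgradients taken at nearby
points where the function value is strictly larger and converges to `f x`. -/
def OuterSubgrad {n : ℕ} (f : En n → EReal) (x : En n) : Set (En n) :=
  {v | ∃ xk vk : ℕ → En n,
      Tendsto xk atTop (nhds x) ∧ Tendsto vk atTop (nhds v) ∧
      Tendsto (fun k => f (xk k)) atTop (nhds (f x)) ∧
      (∀ k, f x < f (xk k)) ∧ ∀ k, vk k ∈ LimSubgrad f (xk k)}

/-- Distance from the origin to a set (`∞` for the empty set). -/
def DistZero {n : ℕ} (S : Set (En n)) : ℝ≥0∞ := EMetric.infEdist 0 S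

/-- `f` is locally lower semicontinuous at `x`. -/
def LocallyLsc {n : ℕ} (f : En n → EReal) (x : En n) : Prop :=
  ∃ ε : ℝ, 0 < ε ∧ ∀ α : ℝ, (α : EReal) ≤ f x + (ε : ℝ) →
    IsClosed {y : En n | ‖y - x‖ ≤ ε ∧ f y ≤ (α : ℝ)}

/-- Prox-regularity of `f` at `x` for the subgradient `0`, where `c = f x`. -/
def ProxRegularAt {n : ℕ} (f : En n → EReal) (x : En n) (c : ℝ) : Prop :=
  LocallyLsc f x ∧ (0 : En n) ∈ LimSubgrad f x ∧
    ∃ ε : ℝ, 0 < ε ∧ ∃ ρ : ℝ, 0 ≤ ρ ∧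
      ∀ y v : En n, v ∈ LimSubgrad f y → ‖v‖ < ε → ‖y - x‖ < ε →
        f y < (c : ℝ) + (ε : ℝ) →
        ∀ x' : En n, ‖x' - x‖ ≤ ε →
          f y + (((inner ℝ v (x' - y) : ℝ) - ρ / 2 * ‖x' - y‖ ^ 2 : ℝ) : EReal) ≤ f x'

/-- The graphical derivative `D(∂f)(x | 0)` of the subgradient mapping at `(x, 0)`:
`z ∈ D(∂f)(x|0)(w)` iff `(w, z)` is tangent to `gph ∂f` at `(x, 0)`. -/
def GraphDerivSubdiff {n : ℕ} (f : En n → EReal) (x : En n) (w : En n) : Set (En n) :=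
  {z | ∃ (t : ℕ → ℝ) (wk zk : ℕ → En n),
      Tendsto t atTop (nhdsWithin 0 (Set.Ioi 0)) ∧
      Tendsto wk atTop (nhds w) ∧ Tendsto zk atTop (nhds z) ∧
      ∀ k, t k • zk k ∈ LimSubgrad f (x + t k • wk k)}

/-- The second subderivative `d²f(x | 0)`. -/
def SecondSubderiv {n : ℕ} (f : En n → EReal) (x : En n) (w : En n) : EReal :=
  Filter.liminf (fun p : ℝ × En n =>
      (((p.1 ^ 2 / 2)⁻¹ : ℝ) : EReal) * (f (x + p.1 • p.2) - f x))
    ((nhdsWithin 0 (Set.Ioi 0)) ×ˢ (nhds w))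

/-!
Since `f` is convex, `0 ∈ ∂f(x̄)` makes `x̄` a global minimizer of `f`, so every difference quotient
defining `d²f(x̄|0)` is nonnegative and `d²f(x̄|0) ≥ 0`. If `d²f(x̄|0)(w) = 0`, then `w` minimizes
`½ d²f(x̄|0)`, hence `0 ∈ ∂[½ d²f(x̄|0)](w) = D(∂f)(x̄|0)(w)`, and nonsingularity forces `w = 0`.
-/

def EConvex {n : ℕ} (f : En n → EReal) : Prop :=
  ∀ x y : En n, ∀ a b : ℝ, 0 ≤ a → 0 ≤ b → a + b = 1 →
    f (a • x + b • y) ≤ ((a : ℝ) : EReal) * f x + ((b : ℝ) : EReal) * f y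

section Subgradients

variable {n : ℕ} {f : En n → EReal}

theorem regSubgrad_subset_limSubgrad (x : En n) : RegSubgrad f x ⊆ LimSubgrad f x :=
  fun v hv => ⟨fun _ => x, fun _ => v, tendsto_const_nhds, tendsto_const_nhds,
    tendsto_const_nhds, fun _ => hv⟩

theorem zero_mem_regSubgrad_of_forall_le {x : En n} (hmin : ∀ u, f x ≤ f u) :
    (0 : En n) ∈ RegSubgrad f x := by
  intro ε hε
  refine ⟨1, one_pos, fun u _ _ => (add_le_of_nonpos_right ?_).trans (hmin u)⟩
  rw [inner_zero_left, zero_sub, EReal.coe_nonpos, neg_nonpos]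
  positivity

/-- Along the segment from `x` to `u`, the first-order bound `f x + t⟪v, u - x⟫ - εt‖u - x‖`
of a regular subgradient meets the chord bound `(1 - t) f x + t f u` of convexity; dividing by `t`
leaves an error `ε‖u - x‖` with `ε` arbitrary. -/
theorem inner_le_sub_of_mem_regSubgrad (hconv : EConvex f) {x u v : En n} {a r : ℝ}
    (hfx : f x = a) (hfu : f u = r) (hv : v ∈ RegSubgrad f x) :
    inner ℝ v (u - x) ≤ r - a := by
  rcases eq_or_ne u x with rfl | hux
  · have : a = r := by exact_mod_cast hfx.symm.trans hfu
    simp [this]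
  have hux' : 0 < ‖u - x‖ := norm_pos_iff.mpr (sub_ne_zero.mpr hux)
  have approx : ∀ ε > 0, inner ℝ v (u - x) ≤ r - a + ε * ‖u - x‖ := by
    intro ε hε
    obtain ⟨δ, hδ, hreg⟩ := hv ε hε
    have hsmall : ∀ᶠ t in 𝓝[>] (0 : ℝ), t < 1 ∧ t * ‖u - x‖ < δ := by
      refine nhdsWithin_le_nhds (Filter.Eventually.and (gt_mem_nhds one_pos) ?_)
      exact (continuous_id.mul continuous_const).continuousAt.eventually_lt
        continuousAt_const (by simpa using hδ)
    obtain ⟨t, ⟨ht1, htδ⟩, ht0 : 0 < t⟩ := (hsmall.and self_mem_nhdsWithin).exists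
    have hstep : x + t • (u - x) - x = t • (u - x) := add_sub_cancel_left _ _
    have hnorm : ‖t • (u - x)‖ = t * ‖u - x‖ := by rw [norm_smul, Real.norm_of_nonneg ht0.le]
    have hfirst := hreg (x + t • (u - x)) (by rwa [hstep, hnorm])
      (by rw [Ne, ← sub_eq_zero, hstep, smul_eq_zero, sub_eq_zero]; exact not_or.mpr ⟨ht0.ne', hux⟩)
    have hchord := hconv x u (1 - t) t (by linarith) ht0.le (by ring)
    rw [show (1 - t) • x + t • u = x + t • (u - x) by module] at hchord
    rw [hfx, hstep, hnorm, real_inner_smul_right] at hfirst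
    rw [hfx, hfu] at hchord
    have hcomb : a + (t * inner ℝ v (u - x) - ε * (t * ‖u - x‖)) ≤ (1 - t) * a + t * r := by
      exact_mod_cast hfirst.trans hchord
    nlinarith
  refine le_of_forall_pos_le_add fun ε hε => ?_
  simpa [div_mul_cancel₀ _ hux'.ne'] using approx (ε / ‖u - x‖) (by positivity)

theorem le_of_zero_mem_limSubgrad (hconv : EConvex f) (hbot : ∀ x, f x ≠ ⊥) {x : En n} {c : ℝ}
    (hfx : f x = c) (hx : (0 : En n) ∈ LimSubgrad f x) (u : En n) : f x ≤ f u := by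
  rcases eq_or_ne (f u) ⊤ with hu | hu
  · simp [hu]
  lift f u to ℝ using ⟨hu, hbot u⟩ with r hr
  obtain ⟨xk, vk, hxk, hvk, hfxk, hreg⟩ := hx
  rw [hfx] at hfxk ⊢
  have hval : Tendsto (fun k => (f (xk k)).toReal) atTop (𝓝 c) :=
    (EReal.tendsto_toReal (EReal.coe_ne_top c) (EReal.coe_ne_bot c)).comp hfxk
  have hlin : Tendsto (fun k => (f (xk k)).toReal + inner ℝ (vk k) (u - xk k)) atTop (𝓝 c) := by
    simpa using hval.add (hvk.inner (tendsto_const_nhds.sub hxk))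
  have hbound : ∀ᶠ k in atTop, (f (xk k)).toReal + inner ℝ (vk k) (u - xk k) ≤ r := by
    filter_upwards [hfxk.eventually_lt_const (EReal.coe_lt_top c)] with k hk
    have := inner_le_sub_of_mem_regSubgrad hconv
      (EReal.coe_toReal hk.ne (hbot _)).symm hr.symm (hreg k)
    linarith
  exact_mod_cast le_of_tendsto hlin hbound

theorem secondSubderiv_nonneg {x : En n} {c : ℝ} (hfx : f x = c) (hmin : ∀ u, f x ≤ f u)
    (w : En n) : 0 ≤ SecondSubderiv f x w := by
  refine Filter.le_liminf_of_le (by isBoundedDefault) (Filter.Eventually.of_forall fun p => ?_)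
  refine mul_nonneg (EReal.coe_nonneg.mpr (by positivity)) ?_
  rw [hfx, EReal.sub_nonneg (Or.inr (EReal.coe_ne_top c)) (Or.inr (EReal.coe_ne_bot c)), ← hfx]
  exact hmin _

end Subgradients

theorem statement_18_general {n : ℕ} (f : En n → EReal) (hbot : ∀ x, f x ≠ ⊥)
    (hconv : ∀ x y : En n, ∀ a b : ℝ, 0 ≤ a → 0 ≤ b → a + b = 1 →
      f (a • x + b • y) ≤ ((a : ℝ) : EReal) * f x + ((b : ℝ) : EReal) * f y)
    (xb : En n) (c : ℝ) (hfc : f xb = (c : ℝ))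
    (hsub : (0 : En n) ∈ LimSubgrad f xb)
    (hformula : ∀ w : En n,
      LimSubgrad (fun u => (((1 / 2 : ℝ)) : EReal) * SecondSubderiv f xb u) w =
        GraphDerivSubdiff f xb w)
    (hnonsing : ∀ w : En n, (0 : En n) ∈ GraphDerivSubdiff f xb w → w = 0) :
    ∀ w : En n, w ≠ 0 → (0 : EReal) < SecondSubderiv f xb w := by
  have hnonneg := secondSubderiv_nonneg hfc (le_of_zero_mem_limSubgrad hconv hbot hfc hsub)
  intro w hw
  refine (hnonneg w).lt_of_ne fun hzero => hw (hnonsing w ?_)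
  rw [← hformula]
  refine regSubgrad_subset_limSubgrad w (zero_mem_regSubgrad_of_forall_le fun u => ?_)
  rw [← hzero, mul_zero]
  exact mul_nonneg (by norm_num) (hnonneg u)

/-- for a convex, proper, lsc function `f` with `0 ∈ ∂f(xb)`,
proper second subderivative satisfying `∂[½ d²f(xb|0)] = D(∂f)(xb|0)`, the
nonsingularity of `D(∂f)(xb|0)` forces `d²f(xb|0)(w) > 0` for all `w ≠ 0`. -/
theorem statement_18 {n : ℕ} (f : En n → EReal) (hbot : ∀ x, f x ≠ ⊥)
    (hne : ∃ x, f x ≠ ⊤) (hlsc : LowerSemicontinuous f)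
    (hconv : ∀ x y : En n, ∀ a b : ℝ, 0 ≤ a → 0 ≤ b → a + b = 1 →
      f (a • x + b • y) ≤ ((a : ℝ) : EReal) * f x + ((b : ℝ) : EReal) * f y)
    (xb : En n) (c : ℝ) (hfc : f xb = (c : ℝ))
    (hsub : (0 : En n) ∈ LimSubgrad f xb)
    (hproper : (∀ w, SecondSubderiv f xb w ≠ ⊥) ∧ ∃ w, SecondSubderiv f xb w ≠ ⊤)
    (hformula : ∀ w : En n,
      LimSubgrad (fun u => (((1 / 2 : ℝ)) : EReal) * SecondSubderiv f xb u) w =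
        GraphDerivSubdiff f xb w)
    (hnonsing : ∀ w : En n, (0 : En n) ∈ GraphDerivSubdiff f xb w → w = 0) :
    ∀ w : En n, w ≠ 0 → (0 : EReal) < SecondSubderiv f xb w :=
  statement_18_general f hbot hconv xb c hfc hsub hformula hnonsing
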